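/- (Orlicz width Brunn–Minkowski inequality) Let φ_1, φ_2 ∈ Φ, let K, L ∈ 𝒦ⁿ, and let i be an integer with 0 ≤ i < n. Then 1 ≥ φ_1((A_i(K)/A_i(K +_φ L))^{1/(n−i)}) + φ_2((A_i(L)/A_i(K +_φ L))^{1/(n−i)}). If φ_1 and φ_2 are strictly convex, equality holds if and only if K and L have similar width. -/

import Mathlib

open MeasureTheory Metric Filter Set
open scoped RealInnerProductSpace ENNReal

noncomputable section
open scoped Pointwise NNReal

abbrev Euc (n : ℕ) := EuclideanSpace ℝ (Fin n)

/-- Support function `h(K,x) = sup {⟨x,y⟩ : y ∈ K}`. -/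
def suppFn {n : ℕ} (K : Set (Euc n)) (x : Euc n) : ℝ :=
  sSup ((fun y => ⟪x, y⟫) '' K)

/-- Half width of `K` in direction `u`: `b(K,u) = (h(K,u)+h(K,-u))/2`. -/
def halfWidth {n : ℕ} (K : Set (Euc n)) (u : Euc n) : ℝ :=
  (suppFn K u + suppFn K (-u)) / 2

/-- A convex body containing the origin in its interior. -/
def IsConvexBody {n : ℕ} (K : Set (Euc n)) : Prop :=
  IsCompact K ∧ Convex ℝ K ∧ (0 : Euc n) ∈ interior K

/-- Spherical Lebesgue measure on the unit sphere. -/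
def sphMeasure (n : ℕ) : Measure (sphere (0 : Euc n) 1) :=
  (volume : Measure (Euc n)).toSphere

/-- Width integral `A_i(K) = (1/n) ∫_{S^{n-1}} b(K,u)^{n-i} dS(u)`. -/
def widthIntegral (n i : ℕ) (K : Set (Euc n)) : ℝ :=
  (1 / (n : ℝ)) * ∫ u : sphere (0 : Euc n) 1,
    halfWidth K (u : Euc n) ^ ((n : ℝ) - i) ∂(sphMeasure n)

/-- `K` and `L` have similar width: `b(L,·) = λ b(K,·)` on the sphere for some `λ > 0`. -/
def SimilarWidth {n : ℕ} (K L : Set (Euc n)) : Prop :=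
  ∃ lam : ℝ, 0 < lam ∧ ∀ u : Euc n, ‖u‖ = 1 → halfWidth L u = lam * halfWidth K u

/-- The class `Φ`: convex, strictly decreasing `φ : (0,∞) → (0,∞)` with
`φ(0⁺)=∞`, `φ(∞)=0`, `φ(1)=1`. -/
structure IsOrliczPhi (φ : ℝ → ℝ) : Prop where
  convexOn : ConvexOn ℝ (Set.Ioi (0 : ℝ)) φ
  strictAntiOn : StrictAntiOn φ (Set.Ioi (0 : ℝ))
  pos : ∀ t : ℝ, 0 < t → 0 < φ t
  tendsto_zero : Filter.Tendsto φ (nhdsWithin 0 (Set.Ioi 0)) Filter.atTop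
  tendsto_atTop : Filter.Tendsto φ Filter.atTop (nhds 0)
  one : φ 1 = 1

/-- Half-width function of the Orlicz width linear combination `K +_φ ε·L`,
given the half widths `bK = b(K,u)`, `bL = b(L,u)`:
`sup {λ > 0 : φ₁(bK/λ) + ε φ₂(bL/λ) ≤ 1}`. -/
def orliczComb (φ₁ φ₂ : ℝ → ℝ) (ε bK bL : ℝ) : ℝ :=
  sSup {lam : ℝ | 0 < lam ∧ φ₁ (bK / lam) + ε * φ₂ (bL / lam) ≤ 1}

/-- `A_i(K +_φ L) = (1/n) ∫ b(K +_φ L, u)^{n-i} dS(u)`. -/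
def orliczAddWidthIntegral (n i : ℕ) (φ₁ φ₂ : ℝ → ℝ) (K L : Set (Euc n)) : ℝ :=
  (1 / (n : ℝ)) * ∫ u : sphere (0 : Euc n) 1,
    orliczComb φ₁ φ₂ 1 (halfWidth K (u : Euc n)) (halfWidth L (u : Euc n)) ^
      ((n : ℝ) - i) ∂(sphMeasure n)

section HW
variable {n : ℕ} {K : Set (Euc n)}

lemma IsConvexBody.nonempty (hK : IsConvexBody K) : K.Nonempty :=
  ⟨0, interior_subset hK.2.2⟩

lemma IsConvexBody.exists_radius (hK : IsConvexBody K) :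
    ∃ R : ℝ, 0 < R ∧ K ⊆ closedBall 0 R := by
  obtain ⟨R, hR⟩ := hK.1.isBounded.subset_closedBall (0 : Euc n)
  exact ⟨max R 1, lt_of_lt_of_le one_pos (le_max_right _ _),
    hR.trans (closedBall_subset_closedBall (le_max_left _ _))⟩

lemma suppFn_bddAbove (hK : IsConvexBody K) (x : Euc n) :
    BddAbove ((fun y => ⟪x, y⟫) '' K) := by
  obtain ⟨R, hR, hsub⟩ := hK.exists_radius
  refine ⟨‖x‖ * R, ?_⟩
  rintro - ⟨y, hy, rfl⟩
  calc ⟪x, y⟫ ≤ ‖x‖ * ‖y‖ := real_inner_le_norm x y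
    _ ≤ ‖x‖ * R := by
        have := hsub hy
        rw [mem_closedBall, dist_zero_right] at this
        exact mul_le_mul_of_nonneg_left this (norm_nonneg x)

lemma le_suppFn (hK : IsConvexBody K) {y : Euc n} (hy : y ∈ K) (x : Euc n) :
    ⟪x, y⟫ ≤ suppFn K x :=
  le_csSup (suppFn_bddAbove hK x) (mem_image_of_mem _ hy)

lemma suppFn_le (hK : IsConvexBody K) {x : Euc n} {c : ℝ}
    (h : ∀ y ∈ K, ⟪x, y⟫ ≤ c) : suppFn K x ≤ c := by
  refine csSup_le (hK.nonempty.image _) ?_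
  rintro - ⟨y, hy, rfl⟩; exact h y hy

lemma suppFn_sub_le (hK : IsConvexBody K) {R : ℝ} (hsub : K ⊆ closedBall 0 R)
    (x y : Euc n) : suppFn K x ≤ suppFn K y + R * ‖x - y‖ := by
  refine suppFn_le hK fun z hz => ?_
  have h1 : ⟪x, z⟫ = ⟪y, z⟫ + ⟪x - y, z⟫ := by rw [inner_sub_left]; ring
  have h2 : ⟪x - y, z⟫ ≤ ‖x - y‖ * ‖z‖ := real_inner_le_norm _ _
  have h3 : ‖z‖ ≤ R := by
    have := hsub hz; rwa [mem_closedBall, dist_zero_right] at this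
  have h4 : ⟪y, z⟫ ≤ suppFn K y := le_suppFn hK hz y
  have h5 : ‖x - y‖ * ‖z‖ ≤ ‖x - y‖ * R :=
    mul_le_mul_of_nonneg_left h3 (norm_nonneg _)
  nlinarith [norm_nonneg (x - y)]

lemma continuous_suppFn (hK : IsConvexBody K) : Continuous (suppFn K) := by
  obtain ⟨R, hR, hsub⟩ := hK.exists_radius
  have : LipschitzWith (Real.toNNReal R) (suppFn K) := by
    refine LipschitzWith.of_dist_le_mul fun x y => ?_
    rw [Real.dist_eq, Real.coe_toNNReal R hR.le, abs_sub_le_iff]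
    constructor
    · have := suppFn_sub_le hK hsub x y
      rw [dist_eq_norm]; linarith
    · have := suppFn_sub_le hK hsub y x
      rw [dist_eq_norm, ← norm_sub_rev]; linarith
  exact this.continuous

lemma continuous_halfWidth (hK : IsConvexBody K) : Continuous (halfWidth K) := by
  unfold halfWidth
  exact (((continuous_suppFn hK)).add ((continuous_suppFn hK).comp continuous_neg)).div_const 2

lemma halfWidth_bounds (hK : IsConvexBody K) :
    ∃ r R : ℝ, 0 < r ∧ ∀ u : Euc n, ‖u‖ = 1 → halfWidth K u ∈ Icc r R := by
  obtain ⟨R, hR, hsub⟩ := hK.exists_radius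
  obtain ⟨ε, hε, hball⟩ := Metric.mem_nhds_iff.mp (mem_interior_iff_mem_nhds.mp hK.2.2)
  refine ⟨ε / 2, R, by positivity, fun u hu => ?_⟩
  have hKsub : ball (0 : Euc n) ε ⊆ K := hball
  have key : ∀ v : Euc n, ‖v‖ = 1 → ε / 2 ≤ suppFn K v := by
    intro v hv
    have hmem : (ε / 2) • v ∈ K := by
      apply hKsub
      rw [mem_ball, dist_zero_right, norm_smul, hv, mul_one]
      rw [Real.norm_eq_abs, abs_of_pos (by positivity)]
      linarith
    have := le_suppFn hK hmem v
    rwa [real_inner_smul_right, real_inner_self_eq_norm_sq, hv, one_pow, mul_one] at this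
  have keyR : ∀ v : Euc n, ‖v‖ = 1 → suppFn K v ≤ R := by
    intro v hv
    refine suppFn_le hK fun y hy => ?_
    have h3 : ‖y‖ ≤ R := by
      have := hsub hy; rwa [mem_closedBall, dist_zero_right] at this
    calc ⟪v, y⟫ ≤ ‖v‖ * ‖y‖ := real_inner_le_norm _ _
      _ ≤ R := by rw [hv, one_mul]; exact h3
  have h1 := key u hu
  have h2 := key (-u) (by rwa [norm_neg])
  have h3 := keyR u hu
  have h4 := keyR (-u) (by rwa [norm_neg])
  constructor <;> [skip; skip] <;> unfold halfWidth <;> [linarith; linarith]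

end HW


section OC

variable {φ₁ φ₂ : ℝ → ℝ}

lemma IsOrliczPhi.continuousOn {φ : ℝ → ℝ} (hφ : IsOrliczPhi φ) : ContinuousOn φ (Ioi 0) :=
  hφ.convexOn.continuousOn isOpen_Ioi

lemma IsOrliczPhi.antitoneOn {φ : ℝ → ℝ} (hφ : IsOrliczPhi φ) : AntitoneOn φ (Ioi 0) :=
  hφ.strictAntiOn.antitoneOn

/-- the function `t ↦ φ₁(a/t) + φ₂(b/t)` -/
def Fc (φ₁ φ₂ : ℝ → ℝ) (a b t : ℝ) : ℝ := φ₁ (a / t) + φ₂ (b / t)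

lemma F_strictMono (hφ₁ : IsOrliczPhi φ₁) (hφ₂ : IsOrliczPhi φ₂) {a b : ℝ}
    (ha : 0 < a) (hb : 0 < b) :
    StrictMonoOn (Fc φ₁ φ₂ a b) (Ioi 0) := by
  intro s hs t ht hst
  have hs' := mem_Ioi.1 hs
  have ht' := mem_Ioi.1 ht
  have h1 : φ₁ (a / t) > φ₁ (a / s) :=
    hφ₁.strictAntiOn (mem_Ioi.2 (by positivity)) (mem_Ioi.2 (by positivity))
      (div_lt_div_of_pos_left ha hs' hst)
  have h2 : φ₂ (b / t) > φ₂ (b / s) :=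
    hφ₂.strictAntiOn (mem_Ioi.2 (by positivity)) (mem_Ioi.2 (by positivity))
      (div_lt_div_of_pos_left hb hs' hst)
  unfold Fc; linarith

lemma F_continuousOn (hφ₁ : IsOrliczPhi φ₁) (hφ₂ : IsOrliczPhi φ₂) {a b : ℝ}
    (ha : 0 < a) (hb : 0 < b) :
    ContinuousOn (Fc φ₁ φ₂ a b) (Ioi 0) := by
  have h1 : ContinuousOn (fun t : ℝ => a / t) (Ioi 0) :=
    continuousOn_const.div continuousOn_id (fun t ht => ne_of_gt (mem_Ioi.1 ht))
  have h2 : ContinuousOn (fun t : ℝ => b / t) (Ioi 0) :=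
    continuousOn_const.div continuousOn_id (fun t ht => ne_of_gt (mem_Ioi.1 ht))
  exact (hφ₁.continuousOn.comp h1 (fun t ht => mem_Ioi.2 (by have := mem_Ioi.1 ht; positivity))).add
    (hφ₂.continuousOn.comp h2 (fun t ht => mem_Ioi.2 (by have := mem_Ioi.1 ht; positivity)))

/-- Existence of the root of `φ₁(a/c) + φ₂(b/c) = 1`. -/
lemma exists_root (hφ₁ : IsOrliczPhi φ₁) (hφ₂ : IsOrliczPhi φ₂) {a b : ℝ}
    (ha : 0 < a) (hb : 0 < b) :
    ∃ c : ℝ, 0 < c ∧ Fc φ₁ φ₂ a b c = 1 := by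
  have hdiv_a : Tendsto (fun t : ℝ => a / t) (nhdsWithin 0 (Ioi 0)) atTop := by
    simpa [div_eq_mul_inv] using tendsto_inv_nhdsGT_zero.const_mul_atTop ha
  have hdiv_b : Tendsto (fun t : ℝ => b / t) (nhdsWithin 0 (Ioi 0)) atTop := by
    simpa [div_eq_mul_inv] using tendsto_inv_nhdsGT_zero.const_mul_atTop hb
  have hF0 : Tendsto (Fc φ₁ φ₂ a b) (nhdsWithin 0 (Ioi 0)) (nhds 0) := by
    have := (hφ₁.tendsto_atTop.comp hdiv_a).add (hφ₂.tendsto_atTop.comp hdiv_b)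
    show Tendsto (fun t => φ₁ (a / t) + φ₂ (b / t)) _ _
    simpa [Fc, Function.comp] using this
  have hFtop : Tendsto (Fc φ₁ φ₂ a b) atTop atTop := by
    have hda : Tendsto (fun t : ℝ => a / t) atTop (nhdsWithin 0 (Ioi 0)) := by
      apply tendsto_nhdsWithin_of_tendsto_nhds_of_eventually_within
      · exact Tendsto.div_atTop tendsto_const_nhds tendsto_id
      · filter_upwards [eventually_gt_atTop (0:ℝ)] with t ht
        exact mem_Ioi.2 (by positivity)
    have hdb : Tendsto (fun t : ℝ => b / t) atTop (nhdsWithin 0 (Ioi 0)) := by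
      apply tendsto_nhdsWithin_of_tendsto_nhds_of_eventually_within
      · exact Tendsto.div_atTop tendsto_const_nhds tendsto_id
      · filter_upwards [eventually_gt_atTop (0:ℝ)] with t ht
        exact mem_Ioi.2 (by positivity)
    have h1 := hφ₁.tendsto_zero.comp hda
    have h2 := hφ₂.tendsto_zero.comp hdb
    have hev : ∀ᶠ t : ℝ in atTop, φ₁ (a / t) ≤ Fc φ₁ φ₂ a b t := by
      filter_upwards [eventually_gt_atTop (0:ℝ)] with t ht
      have : 0 < φ₂ (b / t) := hφ₂.pos _ (by positivity)
      unfold Fc; linarith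
    exact tendsto_atTop_mono' _ hev h1
  obtain ⟨t₀, ht₀mem, ht₀⟩ :
      ∃ t₀, t₀ ∈ Ioi (0:ℝ) ∧ Fc φ₁ φ₂ a b t₀ < 1 := by
    have hev : ∀ᶠ t in nhdsWithin 0 (Ioi 0), Fc φ₁ φ₂ a b t < 1 :=
      hF0.eventually_lt_const one_pos
    exact (eventually_mem_nhdsWithin.and hev).exists.imp (fun t h => ⟨h.1, h.2⟩)
  obtain ⟨t₁, ht₁mem, ht₁⟩ : ∃ t₁, t₁ ∈ Ioi (0:ℝ) ∧ 1 < Fc φ₁ φ₂ a b t₁ := by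
    have hev : ∀ᶠ t in atTop, 1 < Fc φ₁ φ₂ a b t := hFtop.eventually_gt_atTop 1
    exact ((eventually_gt_atTop (0:ℝ)).and hev).exists.imp (fun t h => ⟨h.1, h.2⟩)
  have hlt : t₀ < t₁ := by
    by_contra h
    push_neg at h
    rcases eq_or_lt_of_le h with rfl | h'
    · linarith
    · have := F_strictMono hφ₁ hφ₂ ha hb ht₁mem ht₀mem h'
      linarith
  have hsub : Icc t₀ t₁ ⊆ Ioi 0 := fun x hx => lt_of_lt_of_le (mem_Ioi.1 ht₀mem) hx.1
  have := intermediate_value_Icc hlt.le ((F_continuousOn hφ₁ hφ₂ ha hb).mono hsub)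
  obtain ⟨c, hc, hc1⟩ := this ⟨ht₀.le, ht₁.le⟩
  exact ⟨c, hsub hc, hc1⟩

lemma orliczComb_eq_root (hφ₁ : IsOrliczPhi φ₁) (hφ₂ : IsOrliczPhi φ₂) {a b c : ℝ}
    (ha : 0 < a) (hb : 0 < b) (hc : 0 < c) (h1 : Fc φ₁ φ₂ a b c = 1) :
    orliczComb φ₁ φ₂ 1 a b = c := by
  have hset : {lam : ℝ | 0 < lam ∧ φ₁ (a / lam) + 1 * φ₂ (b / lam) ≤ 1} = Ioc 0 c := by
    ext t
    simp only [mem_setOf_eq, one_mul, mem_Ioc]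
    constructor
    · rintro ⟨ht, hle⟩
      refine ⟨ht, ?_⟩
      by_contra h
      push_neg at h
      have := F_strictMono hφ₁ hφ₂ ha hb (mem_Ioi.2 hc) (mem_Ioi.2 ht) h
      rw [h1] at this
      unfold Fc at this
      linarith
    · rintro ⟨ht, hle⟩
      refine ⟨ht, ?_⟩
      have : Fc φ₁ φ₂ a b t ≤ Fc φ₁ φ₂ a b c :=
        (F_strictMono hφ₁ hφ₂ ha hb).monotoneOn (mem_Ioi.2 ht) (mem_Ioi.2 hc) hle
      rw [h1] at this
      unfold Fc at this
      linarith
  rw [orliczComb, hset, csSup_Ioc hc]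

/-- Main spec lemma. -/
lemma orliczComb_spec (hφ₁ : IsOrliczPhi φ₁) (hφ₂ : IsOrliczPhi φ₂) {a b : ℝ}
    (ha : 0 < a) (hb : 0 < b) :
    0 < orliczComb φ₁ φ₂ 1 a b ∧
      φ₁ (a / orliczComb φ₁ φ₂ 1 a b) + φ₂ (b / orliczComb φ₁ φ₂ 1 a b) = 1 := by
  obtain ⟨c, hc, h1⟩ := exists_root hφ₁ hφ₂ ha hb
  rw [orliczComb_eq_root hφ₁ hφ₂ ha hb hc h1]
  exact ⟨hc, h1⟩

lemma orliczComb_smul (hφ₁ : IsOrliczPhi φ₁) (hφ₂ : IsOrliczPhi φ₂) {a b s : ℝ}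
    (ha : 0 < a) (hb : 0 < b) (hs : 0 < s) :
    orliczComb φ₁ φ₂ 1 (s * a) (s * b) = s * orliczComb φ₁ φ₂ 1 a b := by
  obtain ⟨hc, h1⟩ := orliczComb_spec hφ₁ hφ₂ ha hb
  set c := orliczComb φ₁ φ₂ 1 a b
  refine orliczComb_eq_root hφ₁ hφ₂ (by positivity) (by positivity) (by positivity) ?_
  unfold Fc
  rw [mul_div_mul_left _ _ (ne_of_gt hs), mul_div_mul_left _ _ (ne_of_gt hs)]
  exact h1

lemma orliczComb_mono (hφ₁ : IsOrliczPhi φ₁) (hφ₂ : IsOrliczPhi φ₂) {a b a' b' : ℝ}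
    (ha : 0 < a) (hb : 0 < b) (haa : a ≤ a') (hbb : b ≤ b') :
    orliczComb φ₁ φ₂ 1 a b ≤ orliczComb φ₁ φ₂ 1 a' b' := by
  have ha' : 0 < a' := lt_of_lt_of_le ha haa
  have hb' : 0 < b' := lt_of_lt_of_le hb hbb
  obtain ⟨hc, h1⟩ := orliczComb_spec hφ₁ hφ₂ ha hb
  obtain ⟨hc', h1'⟩ := orliczComb_spec hφ₁ hφ₂ ha' hb'
  set c := orliczComb φ₁ φ₂ 1 a b
  set c' := orliczComb φ₁ φ₂ 1 a' b'
  by_contra h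
  push_neg at h
  -- c' < c; then Fc a' b' c ≤ Fc a b c = 1 but Fc a' b' c > Fc a' b' c' = 1
  have hF1 : Fc φ₁ φ₂ a' b' c ≤ 1 := by
    have e1 : φ₁ (a' / c) ≤ φ₁ (a / c) :=
      hφ₁.antitoneOn (mem_Ioi.2 (by positivity)) (mem_Ioi.2 (by positivity)) (by gcongr)
    have e2 : φ₂ (b' / c) ≤ φ₂ (b / c) :=
      hφ₂.antitoneOn (mem_Ioi.2 (by positivity)) (mem_Ioi.2 (by positivity)) (by gcongr)
    unfold Fc
    linarith
  have h2 := F_strictMono hφ₁ hφ₂ ha' hb' (mem_Ioi.2 hc') (mem_Ioi.2 hc) h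
  unfold Fc at h2 hF1
  rw [h1'] at h2
  linarith

end OC

section OC2
variable {φ₁ φ₂ : ℝ → ℝ}

lemma orliczComb_comp_continuous {X : Type*} [TopologicalSpace X]
    (hφ₁ : IsOrliczPhi φ₁) (hφ₂ : IsOrliczPhi φ₂) {f g : X → ℝ}
    (hf : Continuous f) (hg : Continuous g)
    (hfpos : ∀ x, 0 < f x) (hgpos : ∀ x, 0 < g x) :
    Continuous (fun x => orliczComb φ₁ φ₂ 1 (f x) (g x)) := by
  rw [continuous_iff_continuousAt]
  intro x₀
  set a := f x₀ with ha_def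
  set b := g x₀ with hb_def
  have ha : 0 < a := hfpos x₀
  have hb : 0 < b := hgpos x₀
  set c := orliczComb φ₁ φ₂ 1 a b with hc_def
  have hc : 0 < c := (orliczComb_spec hφ₁ hφ₂ ha hb).1
  set m : X → ℝ := fun x => min (f x / a) (g x / b) with hm_def
  set M : X → ℝ := fun x => max (f x / a) (g x / b) with hM_def
  have hmpos : ∀ x, 0 < m x := fun x => lt_min (div_pos (hfpos x) ha) (div_pos (hgpos x) hb)
  have hMpos : ∀ x, 0 < M x := fun x => lt_of_lt_of_le (hmpos x) (min_le_max)
  have hup : ∀ x, orliczComb φ₁ φ₂ 1 (f x) (g x) ≤ M x * c := by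
    intro x
    have h1 : f x ≤ M x * a := by
      rw [← div_le_iff₀ ha] at *
      exact le_max_left _ _
    have h2 : g x ≤ M x * b := by
      rw [← div_le_iff₀ hb] at *
      exact le_max_right _ _
    calc orliczComb φ₁ φ₂ 1 (f x) (g x) ≤ orliczComb φ₁ φ₂ 1 (M x * a) (M x * b) :=
          orliczComb_mono hφ₁ hφ₂ (hfpos x) (hgpos x) h1 h2
      _ = M x * c := orliczComb_smul hφ₁ hφ₂ ha hb (hMpos x)
  have hlo : ∀ x, m x * c ≤ orliczComb φ₁ φ₂ 1 (f x) (g x) := by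
    intro x
    have h1 : m x * a ≤ f x := by
      rw [← le_div_iff₀ ha]
      exact min_le_left _ _
    have h2 : m x * b ≤ g x := by
      rw [← le_div_iff₀ hb]
      exact min_le_right _ _
    calc m x * c = orliczComb φ₁ φ₂ 1 (m x * a) (m x * b) :=
          (orliczComb_smul hφ₁ hφ₂ ha hb (hmpos x)).symm
      _ ≤ orliczComb φ₁ φ₂ 1 (f x) (g x) :=
          orliczComb_mono hφ₁ hφ₂ (mul_pos (hmpos x) ha) (mul_pos (hmpos x) hb) h1 h2
  have hmc : Tendsto (fun x => m x * c) (nhds x₀) (nhds c) := by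
    have hcont : Continuous (fun x => m x * c) :=
      (((hf.div_const a).min (hg.div_const b)).mul continuous_const)
    have := hcont.continuousAt (x := x₀)
    have hval : m x₀ * c = c := by
      show min (a / a) (b / b) * c = c
      rw [div_self (ne_of_gt ha), div_self (ne_of_gt hb), min_self, one_mul]
    rwa [ContinuousAt, hval] at this
  have hMc : Tendsto (fun x => M x * c) (nhds x₀) (nhds c) := by
    have hcont : Continuous (fun x => M x * c) :=
      (((hf.div_const a).max (hg.div_const b)).mul continuous_const)
    have := hcont.continuousAt (x := x₀)
    have hval : M x₀ * c = c := by
      show max (a / a) (b / b) * c = c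
      rw [div_self (ne_of_gt ha), div_self (ne_of_gt hb), max_self, one_mul]
    rwa [ContinuousAt, hval] at this
  exact tendsto_of_tendsto_of_tendsto_of_le_of_le hmc hMc hlo hup

end OC2


section Jensen
variable {α : Type*} [MeasurableSpace α] {μ : Measure α}

lemma average_mono' [IsFiniteMeasure μ] {h₁ h₂ : α → ℝ} (h : ∀ x, h₁ x ≤ h₂ x)
    (hi₁ : Integrable h₁ μ) (hi₂ : Integrable h₂ μ) : ⨍ x, h₁ x ∂μ ≤ ⨍ x, h₂ x ∂μ := by
  rw [average_eq, average_eq]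
  exact smul_le_smul_of_nonneg_left (integral_mono hi₁ hi₂ h)
    (inv_nonneg.2 ENNReal.toReal_nonneg)

lemma average_add' [IsFiniteMeasure μ] {h₁ h₂ : α → ℝ}
    (hi₁ : Integrable h₁ μ) (hi₂ : Integrable h₂ μ) :
    ⨍ x, (h₁ x + h₂ x) ∂μ = (⨍ x, h₁ x ∂μ) + ⨍ x, h₂ x ∂μ := by
  rw [average_eq, average_eq, average_eq, integral_add hi₁ hi₂, smul_add]

lemma jensen_Icc [IsFiniteMeasure μ] [NeZero μ] {ψ : ℝ → ℝ}
    (hc : ConvexOn ℝ (Ioi 0) ψ) (hcont : ContinuousOn ψ (Ioi 0)) {f : α → ℝ} {δ M : ℝ}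
    (hδ : 0 < δ) (hmem : ∀ x, f x ∈ Icc δ M) (hfi : Integrable f μ)
    (hgi : Integrable (fun x => ψ (f x)) μ) :
    ψ (⨍ x, f x ∂μ) ≤ ⨍ x, ψ (f x) ∂μ := by
  have hsub : Icc δ M ⊆ Ioi 0 := fun x hx => lt_of_lt_of_le hδ hx.1
  exact (hc.subset hsub (convex_Icc _ _)).map_average_le (hcont.mono hsub) isClosed_Icc
    (Eventually.of_forall hmem) hfi hgi

lemma jensen_Icc_strict [IsFiniteMeasure μ] {ψ : ℝ → ℝ}
    (hc : StrictConvexOn ℝ (Ioi 0) ψ) (hcont : ContinuousOn ψ (Ioi 0)) {f : α → ℝ} {δ M : ℝ}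
    (hδ : 0 < δ) (hmem : ∀ x, f x ∈ Icc δ M) (hfi : Integrable f μ)
    (hgi : Integrable (fun x => ψ (f x)) μ) :
    f =ᵐ[μ] Function.const α (⨍ x, f x ∂μ) ∨ ψ (⨍ x, f x ∂μ) < ⨍ x, ψ (f x) ∂μ := by
  have hsub : Icc δ M ⊆ Ioi 0 := fun x hx => lt_of_lt_of_le hδ hx.1
  exact (hc.subset hsub (convex_Icc _ _)).ae_eq_const_or_map_average_lt (hcont.mono hsub)
    isClosed_Icc (Eventually.of_forall hmem) hfi hgi

lemma cont_integrable {β : Type*} [MeasurableSpace β] [TopologicalSpace β]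
    [OpensMeasurableSpace β] [CompactSpace β] [T2Space β] {ν : Measure β} [IsFiniteMeasure ν]
    {h : β → ℝ} (hh : Continuous h) : Integrable h ν :=
  hh.integrable_of_hasCompactSupport (HasCompactSupport.of_compactSpace h)

end Jensen


instance {n : ℕ} : IsFiniteMeasure (sphMeasure n) := by
  unfold sphMeasure; infer_instance

lemma sphMeasure_isOpenPosMeasure {n : ℕ} (hn : 0 < n) :
    (sphMeasure n).IsOpenPosMeasure := by
  constructor
  intro U hU hne
  rw [sphMeasure, Measure.toSphere_apply' _ hU.measurableSet]
  obtain ⟨u₀, hu₀⟩ := hne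
  obtain ⟨O, hO, hOU⟩ := isOpen_induced_iff.mp hU
  have hcont : ContinuousOn (fun x : Euc n => ‖x‖⁻¹ • x) {x : Euc n | x ≠ 0} := by
    exact ((continuous_norm.continuousOn).inv₀ (fun x hx => norm_ne_zero_iff.2 hx)).smul continuousOn_id
  have hWopen : IsOpen ({x : Euc n | x ≠ 0} ∩ (fun x : Euc n => ‖x‖⁻¹ • x) ⁻¹' O) :=
    hcont.isOpen_inter_preimage (isOpen_compl_singleton) hO
  set V : Set (Euc n) := ({x : Euc n | x ≠ 0} ∩ (fun x : Euc n => ‖x‖⁻¹ • x) ⁻¹' O) ∩ ball 0 1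
    with hV_def
  have hVopen : IsOpen V := hWopen.inter isOpen_ball
  have hVsub : V ⊆ Ioo (0:ℝ) 1 • (Subtype.val '' U) := by
    rintro x ⟨⟨hx0, hxO⟩, hxb⟩
    have hx0' : x ≠ 0 := hx0
    have hnx : 0 < ‖x‖ := norm_pos_iff.2 hx0'
    set z : Euc n := ‖x‖⁻¹ • x with hz_def
    have hz : ‖z‖ = 1 := by
      rw [hz_def, norm_smul, norm_inv, norm_norm, inv_mul_cancel₀ (ne_of_gt hnx)]
    have hzs : z ∈ sphere (0 : Euc n) 1 := mem_sphere_zero_iff_norm.2 hz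
    have hzU : (⟨z, hzs⟩ : sphere (0 : Euc n) 1) ∈ U := by
      rw [← hOU]; exact hxO
    have hzim : z ∈ ((↑) '' U : Set (Euc n)) := ⟨⟨z, hzs⟩, hzU, rfl⟩
    have hxe : ‖x‖ • z = x := by
      rw [hz_def, smul_smul, mul_inv_cancel₀ (ne_of_gt hnx), one_smul]
    have hxm : ‖x‖ ∈ Ioo (0:ℝ) 1 := by
      constructor
      · exact hnx
      · rwa [mem_ball, dist_zero_right] at hxb
    exact Set.mem_smul.2 ⟨‖x‖, hxm, z, hzim, hxe⟩
  have hVne : V.Nonempty := by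
    refine ⟨(2⁻¹ : ℝ) • (u₀ : Euc n), ?_⟩
    have hu₀n : ‖(u₀ : Euc n)‖ = 1 := mem_sphere_zero_iff_norm.1 u₀.2
    have hnx : ‖(2⁻¹ : ℝ) • (u₀ : Euc n)‖ = 2⁻¹ := by
      rw [norm_smul, hu₀n, mul_one, Real.norm_eq_abs, abs_of_pos (by norm_num)]
    refine ⟨⟨?_, ?_⟩, ?_⟩
    · intro h
      rw [h, norm_zero] at hnx
      norm_num at hnx
    · show ‖(2⁻¹ : ℝ) • (u₀ : Euc n)‖⁻¹ • ((2⁻¹ : ℝ) • (u₀ : Euc n)) ∈ O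
      rw [hnx, smul_smul]
      norm_num
      rw [← hOU] at hu₀
      exact hu₀
    · rw [mem_ball, dist_zero_right, hnx]
      norm_num
  have hVpos : 0 < volume V := hVopen.measure_pos volume hVne
  have hle : volume V ≤ volume (Ioo (0:ℝ) 1 • (Subtype.val '' U)) := measure_mono hVsub
  have hd : (Module.finrank ℝ (Euc n) : ℝ≥0∞) ≠ 0 := by
    simp [finrank_euclideanSpace_fin]
    omega
  exact ne_of_gt (ENNReal.mul_pos hd (ne_of_gt (lt_of_lt_of_le hVpos hle)))


theorem master {α : Type*} [TopologicalSpace α] [CompactSpace α] [T2Space α] [Nonempty α]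
    [MeasurableSpace α] [BorelSpace α]
    (S : Measure α) [IsFiniteMeasure S] (hS : S.IsOpenPosMeasure)
    {φ₁ φ₂ : ℝ → ℝ} (hφ₁ : IsOrliczPhi φ₁) (hφ₂ : IsOrliczPhi φ₂)
    {p : ℝ} (hp1 : 1 ≤ p)
    {fK fL : α → ℝ} (hfKc : Continuous fK) (hfLc : Continuous fL)
    {rK RK rL RL : ℝ} (hrK : 0 < rK) (hrL : 0 < rL)
    (hbK : ∀ u, fK u ∈ Icc rK RK) (hbL : ∀ u, fL u ∈ Icc rL RL) :
    φ₁ (((∫ u, fK u ^ p ∂S) / ∫ u, orliczComb φ₁ φ₂ 1 (fK u) (fL u) ^ p ∂S) ^ (1/p)) +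
      φ₂ (((∫ u, fL u ^ p ∂S) / ∫ u, orliczComb φ₁ φ₂ 1 (fK u) (fL u) ^ p ∂S) ^ (1/p)) ≤ 1 ∧
    (StrictConvexOn ℝ (Ioi 0) φ₁ → StrictConvexOn ℝ (Ioi 0) φ₂ →
      (φ₁ (((∫ u, fK u ^ p ∂S) / ∫ u, orliczComb φ₁ φ₂ 1 (fK u) (fL u) ^ p ∂S) ^ (1/p)) +
        φ₂ (((∫ u, fL u ^ p ∂S) / ∫ u, orliczComb φ₁ φ₂ 1 (fK u) (fL u) ^ p ∂S) ^ (1/p)) = 1 ↔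
        ∃ lam : ℝ, 0 < lam ∧ ∀ u, fL u = lam * fK u)) := by
  have hp0 : 0 < p := lt_of_lt_of_le one_pos hp1
  have hpne : p ≠ 0 := ne_of_gt hp0
  have hfKpos : ∀ u, 0 < fK u := fun u => lt_of_lt_of_le hrK (hbK u).1
  have hfLpos : ∀ u, 0 < fL u := fun u => lt_of_lt_of_le hrL (hbL u).1
  set fB : α → ℝ := fun u => orliczComb φ₁ φ₂ 1 (fK u) (fL u) with hfB_def
  have hfBpos : ∀ u, 0 < fB u := fun u => (orliczComb_spec hφ₁ hφ₂ (hfKpos u) (hfLpos u)).1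
  have hfBc : Continuous fB := orliczComb_comp_continuous hφ₁ hφ₂ hfKc hfLc hfKpos hfLpos
  set rB : ℝ := orliczComb φ₁ φ₂ 1 rK rL with hrB_def
  set RB : ℝ := orliczComb φ₁ φ₂ 1 RK RL with hRB_def
  have hrB : 0 < rB := (orliczComb_spec hφ₁ hφ₂ hrK hrL).1
  have hfBlb : ∀ u, rB ≤ fB u := fun u =>
    orliczComb_mono hφ₁ hφ₂ hrK hrL (hbK u).1 (hbL u).1
  have hfBub : ∀ u, fB u ≤ RB := fun u =>
    orliczComb_mono hφ₁ hφ₂ (hfKpos u) (hfLpos u) (hbK u).2 (hbL u).2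
  obtain ⟨u₀⟩ := (inferInstance : Nonempty α)
  have hRB : 0 < RB := lt_of_lt_of_le hrB ((hfBlb u₀).trans (hfBub u₀))
  have hpoint : ∀ u, φ₁ (fK u / fB u) + φ₂ (fL u / fB u) = 1 := fun u =>
    (orliczComb_spec hφ₁ hφ₂ (hfKpos u) (hfLpos u)).2
  -- the weighted measure
  set W : α → ℝ≥0 := fun u => Real.toNNReal (fB u ^ p) with hW_def
  have hWc : Continuous W :=
    continuous_real_toNNReal.comp (hfBc.rpow_const (fun u => Or.inr hp0.le))
  have hWcoe : ∀ u, (W u : ℝ) = fB u ^ p := fun u =>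
    Real.coe_toNNReal _ (Real.rpow_nonneg (hfBpos u).le p)
  set μ : Measure α := S.withDensity (fun u => (W u : ℝ≥0∞)) with hμ_def
  have hWm : Measurable W := hWc.measurable
  haveI hμfin : IsFiniteMeasure μ := by
    apply isFiniteMeasure_withDensity
    have hle : ∫⁻ u, (W u : ℝ≥0∞) ∂S ≤ ∫⁻ _, ((Real.toNNReal (RB ^ p) : ℝ≥0∞)) ∂S := by
      apply lintegral_mono
      intro u
      exact ENNReal.coe_le_coe.2 (Real.toNNReal_le_toNNReal
        (Real.rpow_le_rpow (hfBpos u).le (hfBub u) hp0.le))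
    refine ne_of_lt (lt_of_le_of_lt hle ?_)
    rw [lintegral_const]
    exact ENNReal.mul_lt_top ENNReal.coe_lt_top (measure_lt_top S univ)
  have hSuniv : S univ ≠ 0 := hS.open_pos univ isOpen_univ univ_nonempty
  have hμuniv_ne : μ univ ≠ 0 := by
    have h1 : (Real.toNNReal (rB ^ p) : ℝ≥0∞) * S univ ≤ μ univ := by
      rw [hμ_def, withDensity_apply _ MeasurableSet.univ, setLIntegral_univ, ← lintegral_const]
      apply lintegral_mono
      intro u
      exact ENNReal.coe_le_coe.2 (Real.toNNReal_le_toNNReal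
        (Real.rpow_le_rpow hrB.le (hfBlb u) hp0.le))
    refine ne_of_gt (lt_of_lt_of_le ?_ h1)
    apply ENNReal.mul_pos
    · exact_mod_cast (Real.toNNReal_pos.2 (Real.rpow_pos_of_pos hrB p)).ne'
    · exact hSuniv
  haveI hμne : NeZero μ := ⟨by rwa [← Measure.measure_univ_ne_zero]⟩
  -- integral conversions
  have hint : ∀ {h : α → ℝ}, Continuous h → ∫ x, h x ∂μ = ∫ x, fB x ^ p * h x ∂S := by
    intro h hh
    rw [hμ_def, integral_withDensity_eq_integral_smul hWm h]
    congr 1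
    ext u
    rw [NNReal.smul_def, smul_eq_mul, hWcoe u]
  set IK : ℝ := ∫ u, fK u ^ p ∂S with hIK_def
  set IL : ℝ := ∫ u, fL u ^ p ∂S with hIL_def
  set IB : ℝ := ∫ u, orliczComb φ₁ φ₂ 1 (fK u) (fL u) ^ p ∂S with hIB_def
  have hIBfB : IB = ∫ u, fB u ^ p ∂S := rfl
  have hSuT : 0 < (S univ).toReal := ENNReal.toReal_pos hSuniv (measure_ne_top S univ)
  have hpowint : ∀ {h : α → ℝ}, Continuous h → (∀ u, 0 < h u) →
      Integrable (fun u => h u ^ p) S :=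
    fun {h} hh _ => cont_integrable (hh.rpow_const (fun u => Or.inr hp0.le))
  have hposint : ∀ {h : α → ℝ} (r : ℝ), Continuous h → 0 < r → (∀ u, r ≤ h u) →
      0 < ∫ u, h u ^ p ∂S := by
    intro h r hh hr hrle
    have h1 : ∫ u, (fun _ => r ^ p) u ∂S ≤ ∫ u, h u ^ p ∂S := by
      apply integral_mono (integrable_const _)
        (cont_integrable (hh.rpow_const (fun u => Or.inr hp0.le)))
      intro u
      exact Real.rpow_le_rpow hr.le (hrle u) hp0.le
    rw [integral_const, smul_eq_mul] at h1
    have : 0 < S.real univ * r ^ p := mul_pos hSuT (Real.rpow_pos_of_pos hr p)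
    linarith
  have hIKpos : 0 < IK := hposint rK hfKc hrK (fun u => (hbK u).1)
  have hILpos : 0 < IL := hposint rL hfLc hrL (fun u => (hbL u).1)
  have hIBpos : 0 < IB := by rw [hIBfB]; exact hposint rB hfBc hrB hfBlb
  have hμunivT : (μ univ).toReal = IB := by
    rw [hμ_def, withDensity_apply _ MeasurableSet.univ, setLIntegral_univ, hIBfB]
    rw [integral_eq_lintegral_of_nonneg_ae
      (Eventually.of_forall fun u => Real.rpow_nonneg (hfBpos u).le p)
      ((hfBc.rpow_const (fun u => Or.inr hp0.le)).aestronglyMeasurable)]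
    rfl
  have havg : ∀ {h : α → ℝ}, Continuous h →
      ⨍ x, h x ∂μ = (∫ x, fB x ^ p * h x ∂S) / IB := by
    intro h hh
    rw [average_eq, hint hh, show μ.real univ = IB from hμunivT, smul_eq_mul, inv_mul_eq_div]
  -- the ratio functions
  set ffK : α → ℝ := fun u => fK u / fB u with hffK_def
  set ffL : α → ℝ := fun u => fL u / fB u with hffL_def
  have hffKc : Continuous ffK := hfKc.div hfBc (fun u => (hfBpos u).ne')
  have hffLc : Continuous ffL := hfLc.div hfBc (fun u => (hfBpos u).ne')
  set δK : ℝ := rK / RB with hδK_def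
  set δL : ℝ := rL / RB with hδL_def
  have hδKpos : 0 < δK := div_pos hrK hRB
  have hδLpos : 0 < δL := div_pos hrL hRB
  have hmemK : ∀ u, ffK u ∈ Icc δK (RK / rB) := fun u =>
    ⟨div_le_div₀ (hfKpos u).le (hbK u).1 (hfBpos u) (hfBub u),
     div_le_div₀ (lt_of_lt_of_le hrK ((hbK u).1.trans (hbK u).2)).le (hbK u).2 hrB (hfBlb u)⟩
  have hmemL : ∀ u, ffL u ∈ Icc δL (RL / rB) := fun u =>
    ⟨div_le_div₀ (hfLpos u).le (hbL u).1 (hfBpos u) (hfBub u),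
     div_le_div₀ (lt_of_lt_of_le hrL ((hbL u).1.trans (hbL u).2)).le (hbL u).2 hrB (hfBlb u)⟩
  have hffKpos : ∀ u, 0 < ffK u := fun u => div_pos (hfKpos u) (hfBpos u)
  have hffLpos : ∀ u, 0 < ffL u := fun u => div_pos (hfLpos u) (hfBpos u)
  -- integrability over μ
  have hintK : Integrable ffK μ := cont_integrable hffKc
  have hintL : Integrable ffL μ := cont_integrable hffLc
  have hφ₁ffKc : Continuous (fun u => φ₁ (ffK u)) :=
    hφ₁.continuousOn.comp_continuous hffKc (fun u => mem_Ioi.2 (hffKpos u))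
  have hφ₂ffLc : Continuous (fun u => φ₂ (ffL u)) :=
    hφ₂.continuousOn.comp_continuous hffLc (fun u => mem_Ioi.2 (hffLpos u))
  have hintφK : Integrable (fun u => φ₁ (ffK u)) μ := cont_integrable hφ₁ffKc
  have hintφL : Integrable (fun u => φ₂ (ffL u)) μ := cont_integrable hφ₂ffLc
  have hintKp : Integrable (fun u => ffK u ^ p) μ :=
    cont_integrable (hffKc.rpow_const (fun u => Or.inr hp0.le))
  have hintLp : Integrable (fun u => ffL u ^ p) μ :=
    cont_integrable (hffLc.rpow_const (fun u => Or.inr hp0.le))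
  -- averages
  set mK : ℝ := ⨍ x, ffK x ∂μ with hmK_def
  set mL : ℝ := ⨍ x, ffL x ∂μ with hmL_def
  have hmKlb : δK ≤ mK := by
    have := average_mono' (fun u => (hmemK u).1) (integrable_const δK) hintK
    rwa [average_const] at this
  have hmLlb : δL ≤ mL := by
    have := average_mono' (fun u => (hmemL u).1) (integrable_const δL) hintL
    rwa [average_const] at this
  have hmKpos : 0 < mK := lt_of_lt_of_le hδKpos hmKlb
  have hmLpos : 0 < mL := lt_of_lt_of_le hδLpos hmLlb
  -- the p-th moment computation
  have eK : ⨍ x, ffK x ^ p ∂μ = IK / IB := by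
    rw [havg (hffKc.rpow_const (fun u => Or.inr hp0.le))]
    congr 1
    rw [hIK_def]
    apply integral_congr_ae
    apply Eventually.of_forall
    intro u
    show fB u ^ p * ffK u ^ p = fK u ^ p
    rw [hffK_def]
    rw [← Real.mul_rpow (hfBpos u).le (div_nonneg (hfKpos u).le (hfBpos u).le)]
    rw [mul_div_cancel₀ _ (hfBpos u).ne']
  have eL : ⨍ x, ffL x ^ p ∂μ = IL / IB := by
    rw [havg (hffLc.rpow_const (fun u => Or.inr hp0.le))]
    congr 1
    rw [hIL_def]
    apply integral_congr_ae
    apply Eventually.of_forall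
    intro u
    show fB u ^ p * ffL u ^ p = fL u ^ p
    rw [hffL_def]
    rw [← Real.mul_rpow (hfBpos u).le (div_nonneg (hfLpos u).le (hfBpos u).le)]
    rw [mul_div_cancel₀ _ (hfBpos u).ne']
  -- convexity of t ^ p
  have hrpow_convex : ConvexOn ℝ (Ioi 0) (fun t : ℝ => t ^ p) :=
    (convexOn_rpow hp1).subset Ioi_subset_Ici_self (convex_Ioi 0)
  have hrpow_cont : ContinuousOn (fun t : ℝ => t ^ p) (Ioi 0) := fun x hx =>
    (Real.continuousAt_rpow_const x p (Or.inl (ne_of_gt hx))).continuousWithinAt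
  -- Jensen for the power function
  have hJK : mK ^ p ≤ IK / IB := by
    rw [← eK, hmK_def]
    exact jensen_Icc hrpow_convex hrpow_cont hδKpos hmemK hintK hintKp
  have hJL : mL ^ p ≤ IL / IB := by
    rw [← eL, hmL_def]
    exact jensen_Icc hrpow_convex hrpow_cont hδLpos hmemL hintL hintLp
  have hmKle : mK ≤ (IK / IB) ^ (1/p) := by
    rw [one_div]
    calc mK = (mK ^ p) ^ p⁻¹ := (Real.rpow_rpow_inv hmKpos.le hpne).symm
      _ ≤ (IK / IB) ^ p⁻¹ :=
        Real.rpow_le_rpow (Real.rpow_nonneg hmKpos.le p) hJK (inv_nonneg.2 hp0.le)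
  have hmLle : mL ≤ (IL / IB) ^ (1/p) := by
    rw [one_div]
    calc mL = (mL ^ p) ^ p⁻¹ := (Real.rpow_rpow_inv hmLpos.le hpne).symm
      _ ≤ (IL / IB) ^ p⁻¹ :=
        Real.rpow_le_rpow (Real.rpow_nonneg hmLpos.le p) hJL (inv_nonneg.2 hp0.le)
  have hρKpos : 0 < (IK / IB) ^ (1/p) := Real.rpow_pos_of_pos (div_pos hIKpos hIBpos) _
  have hρLpos : 0 < (IL / IB) ^ (1/p) := Real.rpow_pos_of_pos (div_pos hILpos hIBpos) _
  have step1K : φ₁ ((IK / IB) ^ (1/p)) ≤ φ₁ mK :=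
    hφ₁.antitoneOn (mem_Ioi.2 hmKpos) (mem_Ioi.2 hρKpos) hmKle
  have step1L : φ₂ ((IL / IB) ^ (1/p)) ≤ φ₂ mL :=
    hφ₂.antitoneOn (mem_Ioi.2 hmLpos) (mem_Ioi.2 hρLpos) hmLle
  have step2K : φ₁ mK ≤ ⨍ x, φ₁ (ffK x) ∂μ :=
    jensen_Icc hφ₁.convexOn hφ₁.continuousOn hδKpos hmemK hintK hintφK
  have step2L : φ₂ mL ≤ ⨍ x, φ₂ (ffL x) ∂μ :=
    jensen_Icc hφ₂.convexOn hφ₂.continuousOn hδLpos hmemL hintL hintφL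
  have esum : (⨍ x, φ₁ (ffK x) ∂μ) + ⨍ x, φ₂ (ffL x) ∂μ = 1 := by
    rw [← average_add' hintφK hintφL]
    have hfun : (fun x => φ₁ (ffK x) + φ₂ (ffL x)) = fun _ => (1:ℝ) :=
      funext fun u => hpoint u
    calc ⨍ x, (φ₁ (ffK x) + φ₂ (ffL x)) ∂μ = ⨍ _, (1:ℝ) ∂μ := by rw [hfun]
      _ = 1 := average_const μ 1
  constructor
  · linarith
  · intro hsc₁ hsc₂
    constructor
    · -- equality implies similar
      intro heq
      have eqK : φ₁ mK = ⨍ x, φ₁ (ffK x) ∂μ := by linarith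
      have eqL : φ₂ mL = ⨍ x, φ₂ (ffL x) ∂μ := by linarith
      have hconstK : ffK =ᵐ[μ] Function.const α mK := by
        rcases jensen_Icc_strict hsc₁ hφ₁.continuousOn hδKpos hmemK hintK hintφK with h | h
        · exact h
        · rw [← hmK_def] at h; linarith
      have hconstL : ffL =ᵐ[μ] Function.const α mL := by
        rcases jensen_Icc_strict hsc₂ hφ₂.continuousOn hδLpos hmemL hintL hintφL with h | h
        · exact h
        · rw [← hmL_def] at h; linarith
      have hae : ∀ᵐ u ∂μ, mK * fL u = mL * fK u := by
        filter_upwards [hconstK, hconstL] with u h1 h2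
        have e1 : fK u = mK * fB u := by
          simp only [hffK_def, Function.const_apply] at h1
          rwa [div_eq_iff (hfBpos u).ne'] at h1
        have e2 : fL u = mL * fB u := by
          simp only [hffL_def, Function.const_apply] at h2
          rwa [div_eq_iff (hfBpos u).ne'] at h2
        rw [e1, e2]; ring
      have haeS : ∀ᵐ u ∂S, mK * fL u = mL * fK u := by
        have := (ae_withDensity_iff (hWm.coe_nnreal_ennreal)).1 hae
        filter_upwards [this] with u h
        apply h
        simp only [ne_eq, ENNReal.coe_eq_zero]
        exact (Real.toNNReal_pos.2 (Real.rpow_pos_of_pos (hfBpos u) p)).ne'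
      haveI := hS
      have heqfun : (fun u => mK * fL u) = fun u => mL * fK u := by
        have : (fun u => mK * fL u) =ᵐ[S] fun u => mL * fK u := haeS
        exact ((continuous_const.mul hfLc).ae_eq_iff_eq S (continuous_const.mul hfKc)).1 this
      refine ⟨mL / mK, div_pos hmLpos hmKpos, fun u => ?_⟩
      have := congrFun heqfun u
      field_simp
      linarith [this]
    · -- similar implies equality
      rintro ⟨lam, hlam, hprop⟩
      obtain ⟨hc₀, hc₀spec⟩ := orliczComb_spec hφ₁ hφ₂ one_pos hlam
      set c₀ : ℝ := orliczComb φ₁ φ₂ 1 1 lam with hc₀_def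
      have hfBeq : ∀ u, fB u = fK u * c₀ := by
        intro u
        rw [hfB_def]
        show orliczComb φ₁ φ₂ 1 (fK u) (fL u) = fK u * c₀
        calc orliczComb φ₁ φ₂ 1 (fK u) (fL u)
            = orliczComb φ₁ φ₂ 1 (fK u * 1) (fK u * lam) := by
              rw [mul_one, hprop u, mul_comm]
          _ = fK u * c₀ := orliczComb_smul hφ₁ hφ₂ one_pos hlam (hfKpos u)
      have hIBeq : IB = c₀ ^ p * IK := by
        rw [hIBfB, hIK_def, ← integral_const_mul]
        apply integral_congr_ae
        apply Eventually.of_forall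
        intro u
        show fB u ^ p = c₀ ^ p * fK u ^ p
        rw [hfBeq u, Real.mul_rpow (hfKpos u).le hc₀.le]
        ring
      have hILeq : IL = lam ^ p * IK := by
        rw [hIL_def, hIK_def, ← integral_const_mul]
        apply integral_congr_ae
        apply Eventually.of_forall
        intro u
        show fL u ^ p = lam ^ p * fK u ^ p
        rw [hprop u, Real.mul_rpow hlam.le (hfKpos u).le]
      have hρK : (IK / IB) ^ (1/p) = 1 / c₀ := by
        rw [hIBeq]
        have h1 : IK / (c₀ ^ p * IK) = (1/c₀) ^ p := by
          rw [Real.div_rpow one_pos.le hc₀.le, Real.one_rpow]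
          rw [eq_div_iff (ne_of_gt (Real.rpow_pos_of_pos hc₀ p))]
          field_simp
        rw [h1, one_div, one_div, Real.rpow_rpow_inv (inv_nonneg.2 hc₀.le) hpne]
      have hρL : (IL / IB) ^ (1/p) = lam / c₀ := by
        rw [hIBeq, hILeq]
        have h1 : lam ^ p * IK / (c₀ ^ p * IK) = (lam/c₀) ^ p := by
          rw [Real.div_rpow hlam.le hc₀.le]
          rw [div_eq_div_iff (ne_of_gt (mul_pos (Real.rpow_pos_of_pos hc₀ p) hIKpos))
            (ne_of_gt (Real.rpow_pos_of_pos hc₀ p))]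
          ring
        rw [h1, one_div, Real.rpow_rpow_inv (div_nonneg hlam.le hc₀.le) hpne]
      rw [hρK, hρL]
      exact hc₀spec


/-- Orlicz width Brunn–Minkowski inequality:
`1 ≥ φ₁((A_i(K)/A_i(K+_φL))^{1/(n-i)}) + φ₂((A_i(L)/A_i(K+_φL))^{1/(n-i)})`,
with equality (for strictly convex `φ₁, φ₂`) iff `K` and `L` have similar
width. -/
theorem orlicz_width_brunn_minkowski {n : ℕ} (hn : 2 ≤ n) (i : ℕ) (hi : i < n)
    (φ₁ φ₂ : ℝ → ℝ) (hφ₁ : IsOrliczPhi φ₁) (hφ₂ : IsOrliczPhi φ₂)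
    (K L : Set (Euc n)) (hK : IsConvexBody K) (hL : IsConvexBody L) :
    1 ≥ φ₁ ((widthIntegral n i K / orliczAddWidthIntegral n i φ₁ φ₂ K L) ^
          (1 / ((n : ℝ) - i))) +
        φ₂ ((widthIntegral n i L / orliczAddWidthIntegral n i φ₁ φ₂ K L) ^
          (1 / ((n : ℝ) - i))) ∧
    (StrictConvexOn ℝ (Set.Ioi (0 : ℝ)) φ₁ → StrictConvexOn ℝ (Set.Ioi (0 : ℝ)) φ₂ →
      ((1 : ℝ) = φ₁ ((widthIntegral n i K / orliczAddWidthIntegral n i φ₁ φ₂ K L) ^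
            (1 / ((n : ℝ) - i))) +
          φ₂ ((widthIntegral n i L / orliczAddWidthIntegral n i φ₁ φ₂ K L) ^
            (1 / ((n : ℝ) - i))) ↔
        SimilarWidth K L)) := by
  classical
  have hn0 : 0 < n := by omega
  haveI hnes : Nonempty (sphere (0 : Euc n) 1) :=
    ⟨⟨EuclideanSpace.single (⟨0, hn0⟩ : Fin n) (1:ℝ), by
      simp [mem_sphere_zero_iff_norm, EuclideanSpace.norm_single]⟩⟩
  haveI hS := sphMeasure_isOpenPosMeasure (n := n) hn0
  obtain ⟨rK, RK, hrK, hbK⟩ := halfWidth_bounds hK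
  obtain ⟨rL, RL, hrL, hbL⟩ := halfWidth_bounds hL
  have hp1 : (1:ℝ) ≤ (n:ℝ) - (i:ℝ) := by
    have h1 : (i:ℝ) + 1 ≤ (n:ℝ) := by exact_mod_cast hi
    linarith
  have hfKc : Continuous (fun u : sphere (0:Euc n) 1 => halfWidth K (u : Euc n)) :=
    (continuous_halfWidth hK).comp continuous_subtype_val
  have hfLc : Continuous (fun u : sphere (0:Euc n) 1 => halfWidth L (u : Euc n)) :=
    (continuous_halfWidth hL).comp continuous_subtype_val
  have hbK' : ∀ u : sphere (0:Euc n) 1, halfWidth K (u : Euc n) ∈ Icc rK RK :=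
    fun u => hbK _ (mem_sphere_zero_iff_norm.1 u.2)
  have hbL' : ∀ u : sphere (0:Euc n) 1, halfWidth L (u : Euc n) ∈ Icc rL RL :=
    fun u => hbL _ (mem_sphere_zero_iff_norm.1 u.2)
  have hmain := master (sphMeasure n) hS hφ₁ hφ₂ hp1 hfKc hfLc hrK hrL hbK' hbL'
  have hnne : (1 / (n:ℝ)) ≠ 0 := one_div_ne_zero (Nat.cast_ne_zero.2 (by omega))
  have hrwK : widthIntegral n i K / orliczAddWidthIntegral n i φ₁ φ₂ K L =
      (∫ u : sphere (0:Euc n) 1, halfWidth K (u:Euc n) ^ ((n:ℝ) - i) ∂(sphMeasure n)) /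
        ∫ u : sphere (0:Euc n) 1,
          orliczComb φ₁ φ₂ 1 (halfWidth K (u:Euc n)) (halfWidth L (u:Euc n)) ^ ((n:ℝ) - i)
            ∂(sphMeasure n) := by
    simp only [widthIntegral, orliczAddWidthIntegral]
    exact mul_div_mul_left _ _ hnne
  have hrwL : widthIntegral n i L / orliczAddWidthIntegral n i φ₁ φ₂ K L =
      (∫ u : sphere (0:Euc n) 1, halfWidth L (u:Euc n) ^ ((n:ℝ) - i) ∂(sphMeasure n)) /
        ∫ u : sphere (0:Euc n) 1,
          orliczComb φ₁ φ₂ 1 (halfWidth K (u:Euc n)) (halfWidth L (u:Euc n)) ^ ((n:ℝ) - i)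
            ∂(sphMeasure n) := by
    simp only [widthIntegral, orliczAddWidthIntegral]
    exact mul_div_mul_left _ _ hnne
  constructor
  · rw [ge_iff_le, hrwK, hrwL]
    exact hmain.1
  · intro hsc₁ hsc₂
    have hiff := hmain.2 hsc₁ hsc₂
    rw [hrwK, hrwL, eq_comm]
    refine hiff.trans ?_
    constructor
    · rintro ⟨lam, h0, h⟩
      exact ⟨lam, h0, fun u hu => h ⟨u, mem_sphere_zero_iff_norm.2 hu⟩⟩
    · rintro ⟨lam, h0, h⟩
      exact ⟨lam, h0, fun u => h _ (mem_sphere_zero_iff_norm.1 u.2)⟩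

end
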